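/- arXiv:1604.03161 — 6 statements merged into one kernel-verified Lean document; each statement's English description precedes it below -/
import Mathlib

section
/- Let d ≥ 1 and let L ⊂ ℝ^d be a finite set of size n all of whose pairwise distances are distinct. In the full friendly frogs game on L, the first player (Alice) has a winning strategy if n is odd, and the second player (Bob) has a winning strategy if n is even. -/
noncomputable section

/-- Points of `ℝ^d` with the Euclidean norm. -/
abbrev Pt (d : ℕ) := EuclideanSpace ℝ (Fin d)

/-- `L` has all pairwise distances distinct: the distance determines the unordered pair. -/
def DistinctDist {d : ℕ} (L : Set (Pt d)) : Prop :=
  ∀ x ∈ L, ∀ y ∈ L, ∀ z ∈ L, ∀ w ∈ L,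
    x ≠ y → z ≠ w → dist x y = dist z w → (x = z ∧ y = w) ∨ (x = w ∧ y = z)

/-- `L` has no infinite descending chains: no sequence of points of `L` whose consecutive
distances are strictly decreasing. -/
def NoDescChain {d : ℕ} (L : Set (Pt d)) : Prop :=
  ¬ ∃ c : ℕ → Pt d, (∀ n, c n ∈ L) ∧ StrictAnti (fun n => dist (c n) (c (n + 1)))

/-- The move relation of the full friendly frogs game on `L`, including the two opening
placement moves.  Positions are the subsets of `L` of size `0`, `1` or `2` given by the
occupied points. -/
def FullMove {d : ℕ} (L : Set (Pt d)) (p q : Set (Pt d)) : Prop :=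
  (p = ∅ ∧ ∃ x ∈ L, q = {x}) ∨
  (∃ x ∈ L, p = {x} ∧ ∃ y ∈ L, y ≠ x ∧ q = {x, y}) ∨
  (∃ x ∈ L, ∃ y ∈ L, ∃ z ∈ L, x ≠ y ∧ z ≠ x ∧ z ≠ y ∧
    p = {x, y} ∧ q = {x, z} ∧ dist x z < dist x y)

/-- A valid strategy chooses a legal move at every position from which a legal move exists. -/
def ValidStrat {d : ℕ} (L : Set (Pt d)) (σ : Set (Pt d) → Set (Pt d)) : Prop :=
  ∀ p, (∃ q, FullMove L p q) → FullMove L p (σ p)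

/-- The play resulting from strategies `σA` (first player, moving at even times) and `σB`
(second player, moving at odd times), starting from the empty position. `play σA σB n` is
the position after `n` moves. -/
def play {d : ℕ} (σA σB : Set (Pt d) → Set (Pt d)) : ℕ → Set (Pt d)
  | 0 => ∅
  | n + 1 => if Even n then σA (play σA σB n) else σB (play σA σB n)

/-- Alice (the first player) has a winning strategy: she has a valid strategy such that
against every valid strategy of Bob, the play first gets stuck at a position where it is
Bob's turn to move (an odd time). -/
def AliceWins {d : ℕ} (L : Set (Pt d)) : Prop :=
  ∃ σA, ValidStrat L σA ∧ ∀ σB, ValidStrat L σB →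
    ∃ n, Odd n ∧ (∀ q, ¬ FullMove L (play σA σB n) q) ∧
      ∀ m < n, ∃ q, FullMove L (play σA σB m) q

/-- Bob (the second player) has a winning strategy: he has a valid strategy such that
against every valid strategy of Alice, the play first gets stuck at a position where it is
Alice's turn to move (an even time). -/
def BobWins {d : ℕ} (L : Set (Pt d)) : Prop :=
  ∃ σB, ValidStrat L σB ∧ ∀ σA, ValidStrat L σA →
    ∃ n, Even n ∧ (∀ q, ¬ FullMove L (play σA σB n) q) ∧
      ∀ m < n, ∃ q, FullMove L (play σA σB m) q

/-!
Match the points greedily: repeatedly pair off a closest pair of the points not yet matched. A move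
out of a matched pair keeps one of its points, so it lands on an unmatched pair. Conversely, from
an unmatched pair `{x, y}` the first greedy pair meeting `{x, y}` was chosen while `x` and `y` were
both available, so it meets `{x, y}` in one point and, distances being distinct, is strictly
shorter than `x y`: one frog can jump to complete it. So the player who can always move onto a
matched pair never runs out of moves: Bob if every point is matched (`n` even), Alice if she opens
on the unmatched point (`n` odd). Plays are finite because the distance keeps decreasing.
-/

structure IsGreedyMatching {α : Type*} [PseudoMetricSpace α] (L : Finset α) (M : Set (Set α)) :
    Prop where
  subset : ∀ e ∈ M, e ⊆ ↑L
  exists_eq_pair : ∀ e ∈ M, ∃ a b, a ≠ b ∧ e = {a, b}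
  pairwiseDisjoint : M.PairwiseDisjoint id
  covers_of_even : Even L.card → ∀ x ∈ L, ∃ e ∈ M, x ∈ e
  exists_uncovered_of_odd : Odd L.card → ∃ u ∈ L, ∀ e ∈ M, u ∉ e
  exists_le_dist : ∀ x ∈ L, ∀ y ∈ L, x ≠ y → {x, y} ∉ M →
    ∃ a ∈ ({x, y} : Set α), ∃ b ∉ ({x, y} : Set α), {a, b} ∈ M ∧ dist a b ≤ dist x y

namespace IsGreedyMatching

variable {α : Type*} [PseudoMetricSpace α] {L : Finset α} {M : Set (Set α)}

theorem of_card_le_one (hL : L.card ≤ 1) : IsGreedyMatching L ∅ where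
  subset := by simp
  exists_eq_pair := by simp
  pairwiseDisjoint := Set.pairwiseDisjoint_empty
  covers_of_even heven x hx := by
    have : L.card ≠ 0 := Finset.card_ne_zero_of_mem hx
    obtain ⟨k, hk⟩ := heven
    omega
  exists_uncovered_of_odd hodd := by
    obtain ⟨u, hu⟩ := Finset.card_eq_one.1 (show L.card = 1 by obtain ⟨k, hk⟩ := hodd; omega)
    exact ⟨u, by simp [hu], by simp⟩
  exists_le_dist x hx y hy hxy := absurd (Finset.one_lt_card.2 ⟨x, hx, y, hy, hxy⟩) (by omega)

theorem insert_closest [DecidableEq α] {a b : α} (ha : a ∈ L) (hb : b ∈ L) (hab : a ≠ b)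
    (hmin : ∀ x ∈ L, ∀ y ∈ L, x ≠ y → dist a b ≤ dist x y)
    (hM : IsGreedyMatching ((L.erase a).erase b) M) : IsGreedyMatching L (insert {a, b} M) := by
  have hsub : ∀ e ∈ M, ∀ x ∈ e, x ∈ L ∧ x ≠ a ∧ x ≠ b := fun e he x hx => by
    have := hM.subset e he hx
    simp only [Finset.coe_erase, Set.mem_sdiff, Finset.mem_coe, Set.mem_singleton_iff] at this
    exact ⟨this.1.1, this.1.2, this.2⟩
  have hrest : ∀ x ∈ L, x ≠ a → x ≠ b → x ∈ (L.erase a).erase b := fun x hx hxa hxb => by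
    simp [hx, hxa, hxb]
  have hcard : L.card = ((L.erase a).erase b).card + 2 := by
    rw [Finset.card_erase_of_mem (Finset.mem_erase.2 ⟨hab.symm, hb⟩), Finset.card_erase_of_mem ha]
    have : 2 ≤ L.card := Finset.one_lt_card.2 ⟨a, ha, b, hb, hab⟩
    omega
  refine ⟨?_, ?_, ?_, ?_, ?_, ?_⟩
  · rintro e (rfl | he) x hx
    · rcases hx with rfl | rfl <;> assumption
    · exact (hsub e he x hx).1
  · rintro e (rfl | he)
    exacts [⟨a, b, hab, rfl⟩, hM.exists_eq_pair e he]
  · refine hM.pairwiseDisjoint.insert fun e he _ => Set.disjoint_left.2 ?_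
    rintro x (rfl | rfl) hx
    exacts [(hsub e he _ hx).2.1 rfl, (hsub e he _ hx).2.2 rfl]
  · intro heven x hx
    by_cases hxab : x = a ∨ x = b
    · exact ⟨{a, b}, Set.mem_insert _ _, hxab⟩
    push Not at hxab
    obtain ⟨e, he, hxe⟩ := hM.covers_of_even
      (by rw [hcard] at heven; simpa [parity_simps] using heven) x (hrest x hx hxab.1 hxab.2)
    exact ⟨e, Set.mem_insert_of_mem _ he, hxe⟩
  · intro hodd
    obtain ⟨u, hu, huM⟩ := hM.exists_uncovered_of_odd
      (by rw [hcard] at hodd; simpa [parity_simps] using hodd)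
    have hu' := Finset.mem_erase.1 hu
    have hu'' := Finset.mem_erase.1 hu'.2
    refine ⟨u, hu''.2, ?_⟩
    rintro e (rfl | he)
    · rintro (h | h)
      exacts [hu''.1 h, hu'.1 h]
    · exact huM e he
  · intro x hx y hy hxy hxyM
    have hle := hmin x hx y hy hxy
    by_cases hxa : a ∈ ({x, y} : Set α)
    · refine ⟨a, hxa, b, fun hxb => hxyM (Or.inl ?_), Set.mem_insert _ _, hle⟩
      rcases hxa with rfl | rfl <;> rcases hxb with rfl | rfl
      exacts [absurd rfl hab, rfl, Set.pair_comm _ _, absurd rfl hab]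
    by_cases hxb : b ∈ ({x, y} : Set α)
    · refine ⟨b, hxb, a, hxa, by rw [Set.pair_comm]; exact Set.mem_insert _ _, by rwa [dist_comm]⟩
    simp only [Set.mem_insert_iff, Set.mem_singleton_iff, not_or] at hxa hxb
    obtain ⟨a', ha', b', hb', he, hd⟩ := hM.exists_le_dist
      x (hrest x hx (Ne.symm hxa.1) (Ne.symm hxb.1)) y (hrest y hy (Ne.symm hxa.2) (Ne.symm hxb.2))
      hxy fun h => hxyM (Set.mem_insert_of_mem _ h)
    exact ⟨a', ha', b', hb', Set.mem_insert_of_mem _ he, hd⟩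

end IsGreedyMatching

theorem exists_isGreedyMatching {α : Type*} [PseudoMetricSpace α] (L : Finset α) :
    ∃ M, IsGreedyMatching L M := by
  classical
  induction L using Finset.strongInduction with
  | H L ih =>
  by_cases hL : L.card ≤ 1
  · exact ⟨∅, .of_card_le_one hL⟩
  obtain ⟨x, hx, y, hy, hxy⟩ := Finset.one_lt_card.1 (not_le.1 hL)
  obtain ⟨⟨a, b⟩, hab, hmin⟩ := L.offDiag.exists_min_image (fun p => dist p.1 p.2)
    ⟨(x, y), Finset.mem_offDiag.2 ⟨hx, hy, hxy⟩⟩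
  obtain ⟨ha, hb, hab⟩ := Finset.mem_offDiag.1 hab
  obtain ⟨M, hM⟩ := ih _ (((L.erase a).erase_subset b).trans_ssubset (Finset.erase_ssubset ha))
  exact ⟨_, hM.insert_closest ha hb hab fun x hx y hy hxy =>
    hmin (x, y) (Finset.mem_offDiag.2 ⟨hx, hy, hxy⟩)⟩

section Moves

variable {d : ℕ} {L : Set (Pt d)} {p q r : Set (Pt d)} {x y : Pt d}

theorem fullMove_empty (h : FullMove L ∅ q) : ∃ x ∈ L, q = {x} := by
  rcases h with ⟨-, h⟩ | ⟨x, -, h, -⟩ | ⟨x, -, y, -, z, -, -, -, -, h, -⟩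
  · exact h
  · exact absurd h.symm (Set.singleton_ne_empty x)
  · exact absurd h.symm (Set.insert_nonempty x {y}).ne_empty

theorem fullMove_singleton (h : FullMove L {x} q) : x ∈ L ∧ ∃ y ∈ L, y ≠ x ∧ q = {x, y} := by
  rcases h with ⟨h, -⟩ | ⟨z, hz, h, h'⟩ | ⟨a, -, b, -, c, -, hab, -, -, h, -⟩
  · exact absurd h (Set.singleton_ne_empty x)
  · obtain rfl := Set.singleton_eq_singleton_iff.1 h
    exact ⟨hz, h'⟩
  · have ha : a = x := (h.symm ▸ Set.mem_insert a {b} : a ∈ ({x} : Set (Pt d)))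
    have hb : b = x := (h.symm ▸ Set.mem_insert_of_mem a rfl : b ∈ ({x} : Set (Pt d)))
    exact absurd (ha.trans hb.symm) hab

theorem fullMove_pair (h : FullMove L {x, y} q) (hxy : x ≠ y) :
    ∃ a ∈ L, ∃ b ∈ L, ∃ c ∈ L, a ≠ b ∧ c ≠ a ∧ c ≠ b ∧
      ({x, y} : Set (Pt d)) = {a, b} ∧ q = {a, c} ∧ dist a c < dist a b := by
  rcases h with ⟨h, -⟩ | ⟨z, -, h, -⟩ | h
  · exact absurd h (Set.insert_nonempty x {y}).ne_empty
  · have hx : x = z := (h ▸ Set.mem_insert x {y} : x ∈ ({z} : Set (Pt d)))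
    have hy : y = z := (h ▸ Set.mem_insert_of_mem x rfl : y ∈ ({z} : Set (Pt d)))
    exact absurd (hx.trans hy.symm) hxy
  · exact h

theorem fullMove_pair_of_dist_lt {z : Pt d} (hx : x ∈ L) (hy : y ∈ L) (hz : z ∈ L) (hxy : x ≠ y)
    (hzx : z ≠ x) (hzy : z ≠ y) (h : dist x z < dist x y) : FullMove L {x, y} {x, z} :=
  Or.inr (Or.inr ⟨x, hx, y, hy, z, hz, hxy, hzx, hzy, rfl, rfl, h⟩)

theorem exists_pair_of_fullMove_fullMove (hpq : FullMove L p q) (hqr : FullMove L q r) :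
    ∃ x ∈ L, ∃ y ∈ L, x ≠ y ∧ r = {x, y} := by
  have pair_of_pair : ∀ {x y : Pt d}, x ≠ y → FullMove L {x, y} r →
      ∃ x ∈ L, ∃ y ∈ L, x ≠ y ∧ r = {x, y} := fun hxy h => by
    obtain ⟨a, ha, -, -, c, hc, -, hca, -, -, hr, -⟩ := fullMove_pair h hxy
    exact ⟨a, ha, c, hc, hca.symm, hr⟩
  rcases hpq with
    ⟨-, x, -, rfl⟩ | ⟨x, -, -, y, -, hyx, rfl⟩ | ⟨x, -, -, -, z, -, -, hzx, -, -, rfl, -⟩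
  · obtain ⟨hx, y, hy, hyx, hr⟩ := fullMove_singleton hqr
    exact ⟨x, hx, y, hy, hyx.symm, hr⟩
  · exact pair_of_pair hyx.symm hqr
  · exact pair_of_pair hzx.symm hqr

theorem diam_lt_of_fullMove (h : FullMove L {x, y} q) (hxy : x ≠ y) :
    Metric.diam q < Metric.diam ({x, y} : Set (Pt d)) := by
  obtain ⟨a, -, b, -, c, -, -, -, -, hab, rfl, hlt⟩ := fullMove_pair h hxy
  rwa [hab, Metric.diam_pair, Metric.diam_pair]

theorem not_forall_fullMove (hL : L.Finite) (s : ℕ → Set (Pt d)) :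
    ¬ ∀ k, FullMove L (s k) (s (k + 1)) := by
  intro hs
  have hpair k := exists_pair_of_fullMove_fullMove (hs k) (hs (k + 1))
  have hanti : StrictAnti fun k => Metric.diam (s (k + 2)) := strictAnti_nat_of_succ_lt fun k => by
    obtain ⟨x, -, y, -, hxy, hk⟩ := hpair k
    exact hk ▸ diam_lt_of_fullMove (hk ▸ hs (k + 2)) hxy
  have hfin : ((fun p : Pt d × Pt d => dist p.1 p.2) '' (L ×ˢ L)).Finite := (hL.prod hL).image _
  refine Set.infinite_range_of_injective hanti.injective (hfin.subset ?_)
  rintro - ⟨k, rfl⟩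
  obtain ⟨x, hx, y, hy, -, hk⟩ := hpair k
  exact ⟨(x, y), ⟨hx, hy⟩, by simp [hk, Metric.diam_pair]⟩

end Moves

section Strategies

variable {d : ℕ} {L : Set (Pt d)} {W : Set (Set (Pt d))} {σA σB : Set (Pt d) → Set (Pt d)}

/-- On a finite board, the positions of `W` are lost by the player to move. -/
def IsLosingSet (L : Set (Pt d)) (W : Set (Set (Pt d))) : Prop :=
  ∀ p ∈ W, ∀ q, FullMove L p q → ∃ r ∈ W, FullMove L q r

open Classical in
def moveInto (L : Set (Pt d)) (W : Set (Set (Pt d))) (p : Set (Pt d)) : Set (Pt d) :=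
  if h : ∃ q ∈ W, FullMove L p q then h.choose
  else if h' : ∃ q, FullMove L p q then h'.choose else p

theorem validStrat_moveInto : ValidStrat L (moveInto L W) := by
  intro p hp
  unfold moveInto
  split_ifs with h
  · exact h.choose_spec.2
  · exact hp.choose_spec

theorem moveInto_mem {p : Set (Pt d)} (h : ∃ q ∈ W, FullMove L p q) : moveInto L W p ∈ W := by
  rw [moveInto, dif_pos h]
  exact h.choose_spec.1

theorem play_succ_of_even {k : ℕ} (hk : Even k) :
    play σA σB (k + 1) = σA (play σA σB k) := by
  simp [play, hk]

theorem play_succ_of_odd {k : ℕ} (hk : Odd k) :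
    play σA σB (k + 1) = σB (play σA σB k) := by
  simp [play, Nat.not_even_iff_odd.2 hk]

theorem fullMove_play_succ (hA : ValidStrat L σA) (hB : ValidStrat L σB) {k : ℕ}
    (h : ∃ q, FullMove L (play σA σB k) q) : FullMove L (play σA σB k) (play σA σB (k + 1)) := by
  rcases Nat.even_or_odd k with hk | hk
  · rw [play_succ_of_even hk]; exact hA _ h
  · rw [play_succ_of_odd hk]; exact hB _ h

theorem exists_first_stuck (hL : L.Finite) (hA : ValidStrat L σA) (hB : ValidStrat L σB) :
    ∃ N, (∀ q, ¬ FullMove L (play σA σB N) q) ∧ ∀ m < N, ∃ q, FullMove L (play σA σB m) q := by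
  classical
  have hstuck : ∃ N, ∀ q, ¬ FullMove L (play σA σB N) q := by
    by_contra! h
    exact not_forall_fullMove hL (play σA σB) fun k => fullMove_play_succ hA hB (h k)
  exact ⟨Nat.find hstuck, Nat.find_spec hstuck, fun m hm => by simpa using Nat.find_min hstuck hm⟩

/-- `s` is a play stuck at time `N`, in which one player moves by `moveInto L W` from time `i + 1`
on; it is the other player who gets stuck. -/
theorem even_sub_of_isLosingSet (hW : IsLosingSet L W) {s : ℕ → Set (Pt d)} {i N : ℕ}
    (hstep : ∀ m < N, FullMove L (s m) (s (m + 1))) (hstuck : ∀ q, ¬ FullMove L (s N) q)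
    (hanswer : ∀ j, s (i + 2 * j + 2) = moveInto L W (s (i + 2 * j + 1)))
    (hi : s i ∈ W) (hiN : i ≤ N) : Even (N - i) := by
  have hmem : ∀ j, i + 2 * j ≤ N → s (i + 2 * j) ∈ W := by
    intro j
    induction j with
    | zero => exact fun _ => hi
    | succ j ih =>
      intro hj
      obtain ⟨r, hr, hmove⟩ := hW _ (ih (by omega)) _ (hstep _ (by omega))
      rw [show i + 2 * (j + 1) = i + 2 * j + 2 by ring, hanswer]
      exact moveInto_mem ⟨r, hr, hmove⟩
  by_contra hodd
  obtain ⟨j, hj⟩ := Nat.not_even_iff_odd.1 hodd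
  obtain ⟨r, -, hmove⟩ := hW _ (hmem j (by omega)) _ (hstep _ (by omega))
  exact hstuck r (by rwa [show N = i + 2 * j + 1 by omega])

theorem bobWins_of_isLosingSet (hL : L.Finite) (hW : IsLosingSet L W) (h0 : ∅ ∈ W) :
    BobWins L := by
  refine ⟨moveInto L W, validStrat_moveInto, fun σA hA => ?_⟩
  obtain ⟨N, hstuck, hmoves⟩ := exists_first_stuck hL hA (validStrat_moveInto (W := W))
  refine ⟨N, ?_, hstuck, hmoves⟩
  simpa using even_sub_of_isLosingSet (s := play σA (moveInto L W)) (i := 0) hW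
    (fun m hm => fullMove_play_succ hA validStrat_moveInto (hmoves m hm)) hstuck
    (fun j => play_succ_of_odd (by simp [parity_simps])) h0 N.zero_le

theorem aliceWins_of_isLosingSet (hL : L.Finite) (hW : IsLosingSet L W)
    (h0 : ∃ q ∈ W, FullMove L ∅ q) : AliceWins L := by
  refine ⟨moveInto L W, validStrat_moveInto, fun σB hB => ?_⟩
  obtain ⟨N, hstuck, hmoves⟩ := exists_first_stuck hL (validStrat_moveInto (W := W)) hB
  have hN : 1 ≤ N := Nat.one_le_iff_ne_zero.2 fun hN => by
    obtain ⟨q, -, hq⟩ := h0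
    exact hstuck q (hN ▸ hq)
  refine ⟨N, ?_, hstuck, hmoves⟩
  have := even_sub_of_isLosingSet (s := play (moveInto L W) σB) (i := 1) hW
    (fun m hm => fullMove_play_succ validStrat_moveInto hB (hmoves m hm)) hstuck
    (fun j => play_succ_of_even (by simp [parity_simps])) (moveInto_mem h0) hN
  obtain ⟨k, hk⟩ := this
  exact ⟨k, by omega⟩

end Strategies

namespace IsGreedyMatching

variable {d : ℕ} {L : Finset (Pt d)} {M : Set (Set (Pt d))} {p q : Set (Pt d)} {x y : Pt d}

theorem exists_mem_fullMove_singleton (hM : IsGreedyMatching L M) {e : Set (Pt d)} (he : e ∈ M)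
    (hx : x ∈ e) : ∃ r ∈ M, FullMove (↑L) {x} r := by
  obtain ⟨a, b, hab, rfl⟩ := hM.exists_eq_pair e he
  have ha := hM.subset _ he (Set.mem_insert a {b})
  have hb := hM.subset _ he (Set.mem_insert_of_mem a rfl)
  rcases hx with rfl | rfl
  · exact ⟨_, he, Or.inr (Or.inl ⟨x, ha, rfl, b, hb, hab.symm, rfl⟩)⟩
  · exact ⟨_, he, Or.inr (Or.inl ⟨x, hb, rfl, a, ha, hab, Set.pair_comm _ _⟩)⟩

theorem exists_mem_fullMove_pair (hM : IsGreedyMatching L M)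
    (hdist : DistinctDist (↑L : Set (Pt d))) (hx : x ∈ L) (hy : y ∈ L) (hxy : x ≠ y)
    (hxyM : {x, y} ∉ M) :
    ∃ r ∈ M, FullMove (↑L) {x, y} r := by
  obtain ⟨a, ha, b, hb, habM, hle⟩ := hM.exists_le_dist x hx y hy hxy hxyM
  have haL : a ∈ L := hM.subset _ habM (Set.mem_insert a {b})
  have hbL : b ∈ L := hM.subset _ habM (Set.mem_insert_of_mem a rfl)
  have hab : a ≠ b := by rintro rfl; exact hb ha
  have hlt : dist a b < dist x y := hle.lt_of_ne fun h => by
    rcases hdist a haL b hbL x hx y hy hab hxy h with ⟨-, rfl⟩ | ⟨-, rfl⟩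
    exacts [hb (Set.mem_insert_of_mem _ rfl), hb (Set.mem_insert _ _)]
  simp only [Set.mem_insert_iff, Set.mem_singleton_iff, not_or] at ha hb
  rcases ha with rfl | rfl
  · exact ⟨_, habM, fullMove_pair_of_dist_lt hx hy hbL hxy hb.1 hb.2 hlt⟩
  · rw [Set.pair_comm]
    exact ⟨_, habM, fullMove_pair_of_dist_lt hy hx hbL hxy.symm hb.2 hb.1
      (by rwa [dist_comm a x])⟩

theorem notMem_of_fullMove (hM : IsGreedyMatching L M) (hp : p ∈ M) (h : FullMove (↑L) p q) :
    q ∉ M ∧ ∃ x ∈ L, ∃ y ∈ L, x ≠ y ∧ q = {x, y} := by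
  obtain ⟨x, y, hxy, rfl⟩ := hM.exists_eq_pair p hp
  obtain ⟨a, -, b, -, c, hc, -, hca, hcb, hab, rfl, -⟩ := fullMove_pair h hxy
  refine ⟨fun hq => ?_, a, ?_, c, hc, hca.symm, rfl⟩
  · have := hM.pairwiseDisjoint.elim hq hp
      (Set.not_disjoint_iff.2 ⟨a, Set.mem_insert _ _, hab ▸ Set.mem_insert _ _⟩)
    have hc' : c ∈ ({a, b} : Set (Pt d)) := hab ▸ this ▸ Set.mem_insert_of_mem a rfl
    rcases hc' with h | h
    exacts [hca h, hcb h]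
  · exact hM.subset _ hp (hab ▸ Set.mem_insert a {b})

theorem exists_mem_fullMove_of_mem (hM : IsGreedyMatching L M)
    (hdist : DistinctDist (↑L : Set (Pt d))) (hp : p ∈ M) (h : FullMove (↑L) p q) :
    ∃ r ∈ M, FullMove (↑L) q r := by
  obtain ⟨hqM, x, hx, y, hy, hxy, rfl⟩ := hM.notMem_of_fullMove hp h
  exact hM.exists_mem_fullMove_pair hdist hx hy hxy hqM

theorem isLosingSet_insert_empty (hM : IsGreedyMatching L M)
    (hdist : DistinctDist (↑L : Set (Pt d))) (hcover : ∀ x ∈ L, ∃ e ∈ M, x ∈ e) :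
    IsLosingSet (↑L) (insert ∅ M) := by
  rintro p (rfl | hp) q hq
  · obtain ⟨x, hx, rfl⟩ := fullMove_empty hq
    obtain ⟨e, he, hxe⟩ := hcover x hx
    obtain ⟨r, hr, hmove⟩ := hM.exists_mem_fullMove_singleton he hxe
    exact ⟨r, Set.mem_insert_of_mem _ hr, hmove⟩
  · obtain ⟨r, hr, hmove⟩ := hM.exists_mem_fullMove_of_mem hdist hp hq
    exact ⟨r, Set.mem_insert_of_mem _ hr, hmove⟩

theorem isLosingSet_insert_singleton (hM : IsGreedyMatching L M)
    (hdist : DistinctDist (↑L : Set (Pt d))) {u : Pt d} (hu : ∀ e ∈ M, u ∉ e) :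
    IsLosingSet (↑L) (insert {u} M) := by
  rintro p (rfl | hp) q hq
  · obtain ⟨huL, y, hy, hyu, rfl⟩ := fullMove_singleton hq
    have huyM : {u, y} ∉ M := fun h => hu _ h (Set.mem_insert u {y})
    obtain ⟨r, hr, hmove⟩ := hM.exists_mem_fullMove_pair hdist huL hy hyu.symm huyM
    exact ⟨r, Set.mem_insert_of_mem _ hr, hmove⟩
  · obtain ⟨r, hr, hmove⟩ := hM.exists_mem_fullMove_of_mem hdist hp hq
    exact ⟨r, Set.mem_insert_of_mem _ hr, hmove⟩

end IsGreedyMatching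

theorem friendly_frogs_finite_general {d n : ℕ} (L : Finset (Pt d))
    (hcard : L.card = n) (hdist : DistinctDist (↑L : Set (Pt d))) :
    (Odd n → AliceWins (↑L : Set (Pt d))) ∧ (Even n → BobWins (↑L : Set (Pt d))) := by
  obtain ⟨M, hM⟩ := exists_isGreedyMatching L
  subst hcard
  refine ⟨fun hodd => ?_, fun heven => ?_⟩
  · obtain ⟨u, hu, huM⟩ := hM.exists_uncovered_of_odd hodd
    exact aliceWins_of_isLosingSet L.finite_toSet (hM.isLosingSet_insert_singleton hdist huM)
      ⟨{u}, Set.mem_insert _ _, Or.inl ⟨rfl, u, hu, rfl⟩⟩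
  · exact bobWins_of_isLosingSet L.finite_toSet
      (hM.isLosingSet_insert_empty hdist (hM.covers_of_even heven)) (Set.mem_insert _ _)

/-- in the full friendly frogs game on a finite set of size `n` in `ℝ^d`
(`d ≥ 1`) with distinct distances, Alice wins if `n` is odd and Bob wins if `n` is even. -/
theorem friendly_frogs_finite {d n : ℕ} (hd : 1 ≤ d) (L : Finset (Pt d))
    (hcard : L.card = n) (hdist : DistinctDist (↑L : Set (Pt d))) :
    (Odd n → AliceWins (↑L : Set (Pt d))) ∧ (Even n → BobWins (↑L : Set (Pt d))) :=
  friendly_frogs_finite_general L hcard hdist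
end
end

section
/- Suppose L ⊂ ℝ^d has all pairwise distances distinct and has no infinite descending chains. Then there exists a unique stable matching of L. -/
noncomputable section

/-- `R` encodes a matching of `L` (as the symmetric relation "matched to"):
a set of unordered pairs of distinct points of `L`, each point in at most one pair. -/
def IsMatching {d : ℕ} (L : Set (Pt d)) (R : Pt d → Pt d → Prop) : Prop :=
  (∀ x y, R x y → R y x) ∧
  (∀ x y, R x y → x ∈ L ∧ y ∈ L ∧ x ≠ y) ∧
  (∀ x y z, R x y → R x z → y = z)

/-- The matching `R` of `L` is stable: there is no pair of distinct points of `L`, not matched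
to each other, each of which is unmatched or strictly farther from its partner than from
the other point. -/
def IsStable {d : ℕ} (L : Set (Pt d)) (R : Pt d → Pt d → Prop) : Prop :=
  ¬ ∃ x ∈ L, ∃ y ∈ L, x ≠ y ∧ ¬ R x y ∧
    (∀ z, R x z → dist x y < dist x z) ∧ (∀ z, R y z → dist x y < dist y z)

/-!
Uniqueness: if two stable matchings differed, an edge of one missing from the other would start
an alternating path of edges whose lengths decrease strictly, by stability and distinctness of
distances, i.e. an infinite descending chain.

Existence: a descending chain also cannot accumulate, so `L` is locally finite and every subset
of `L` with two points contains a mutually nearest pair. By Zorn's lemma there is a maximal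
matching in which no blocking pair contains a matched point; if two points were left unmatched,
a mutually nearest pair of unmatched points could be added to it.
-/

open Metric

variable {d : ℕ} {L S : Set (Pt d)}

theorem DistinctDist.dist_ne_dist (hdist : DistinctDist L) {x y z : Pt d} (hx : x ∈ L)
    (hy : y ∈ L) (hz : z ∈ L) (hxy : x ≠ y) (hxz : x ≠ z) (hyz : y ≠ z) :
    dist x y ≠ dist x z := by
  intro h
  rcases hdist x hx y hy x hx z hz hxy hxz h with ⟨-, h⟩ | ⟨h, -⟩
  exacts [hyz h, hxz h]

theorem NoDescChain.not_of_step (hchain : NoDescChain L) {P : Pt d → Pt d → Prop}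
    (hPL : ∀ a b, P a b → a ∈ L) (hstep : ∀ a b, P a b → ∃ c, P b c ∧ dist b c < dist a b)
    (a b : Pt d) : ¬ P a b := by
  intro hab
  choose next hnext using hstep
  let succ (e : {e : Pt d × Pt d // P e.1 e.2}) : {e : Pt d × Pt d // P e.1 e.2} :=
    ⟨(e.1.2, next _ _ e.2), (hnext _ _ e.2).1⟩
  let e (n : ℕ) := succ^[n] ⟨(a, b), hab⟩
  have he : ∀ n, e (n + 1) = succ (e n) := fun n => Function.iterate_succ_apply' succ n _
  refine hchain ⟨fun n => (e n).1.1, fun n => hPL _ _ (e n).2, strictAnti_nat_of_succ_lt ?_⟩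
  intro n
  simp only [he]
  exact (hnext _ _ (e n).2).2

theorem NoDescChain.finite_inter_closedBall (hchain : NoDescChain L) (x : Pt d) (r : ℝ) :
    (L ∩ closedBall x r).Finite := by
  by_contra hinf
  obtain ⟨p, -, hp⟩ :=
    Set.Infinite.exists_accPt_of_subset_isCompact hinf (isCompact_closedBall x r)
      Set.inter_subset_right
  have hnear : ∀ ε > 0, ∃ q ∈ L, q ≠ p ∧ dist q p < ε := by
    intro ε hε
    obtain ⟨q, ⟨hqp, hqL, -⟩, hq⟩ := accPt_iff_nhds.1 hp _ (ball_mem_nhds p hε)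
    exact ⟨q, hqL, hq, hqp⟩
  have hcloser : ∀ q ∈ L, q ≠ p → ∃ q' ∈ L, q' ≠ p ∧ 3 * dist q' p < dist q p := by
    intro q _ hq
    obtain ⟨q', hq'L, hq', hlt⟩ := hnear (dist q p / 3) (by have := dist_pos.2 hq; positivity)
    exact ⟨q', hq'L, hq', by linarith⟩
  obtain ⟨a₀, ha₀, ha₀p, -⟩ := hnear 1 one_pos
  obtain ⟨b₀, hb₀, hb₀p, ha₀b₀⟩ := hcloser a₀ ha₀ ha₀p
  -- Points approaching `p` geometrically fast: consecutive gaps then shrink strictly.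
  refine hchain.not_of_step (P := fun a b => a ∈ L ∧ b ∈ L ∧ b ≠ p ∧ 3 * dist b p < dist a p)
    (fun _ _ h => h.1) ?_ a₀ b₀ ⟨ha₀, hb₀, hb₀p, ha₀b₀⟩
  rintro a b ⟨-, hb, hbp, hab⟩
  obtain ⟨c, hc, hcp, hbc⟩ := hcloser b hb hbp
  refine ⟨c, ⟨hb, hc, hcp, hbc⟩, ?_⟩
  have := dist_triangle_right b c p
  have := dist_triangle a b p
  have := dist_pos.2 hbp
  linarith

def IsNearest (S : Set (Pt d)) (a b : Pt d) : Prop :=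
  b ∈ S ∧ b ≠ a ∧ ∀ c ∈ S, c ≠ a → dist a b ≤ dist a c

theorem NoDescChain.exists_isNearest (hchain : NoDescChain L) (hS : S ⊆ L) {a b : Pt d}
    (hb : b ∈ S) (hba : b ≠ a) : ∃ c, IsNearest S a c := by
  set F := (S ∩ closedBall a (dist a b)) \ {a}
  have hF : F.Finite :=
    (hchain.finite_inter_closedBall a _).subset (Set.sdiff_subset.trans (by gcongr))
  have hbF : b ∈ F := ⟨⟨hb, by rw [mem_closedBall, dist_comm]⟩, hba⟩
  obtain ⟨c, ⟨⟨hc, -⟩, hca⟩, hmin⟩ := Set.exists_min_image F (dist a) hF ⟨b, hbF⟩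
  refine ⟨c, hc, hca, fun e he hea => ?_⟩
  by_cases hae : dist a e ≤ dist a b
  · exact hmin e ⟨⟨he, by rwa [mem_closedBall, dist_comm]⟩, hea⟩
  · exact (hmin b hbF).trans (le_of_not_ge hae)

theorem NoDescChain.exists_isNearest_pair (hchain : NoDescChain L) (hS : S ⊆ L) {a b : Pt d}
    (ha : a ∈ S) (hb : b ∈ S) (hab : a ≠ b) : ∃ x y, IsNearest S x y ∧ IsNearest S y x := by
  by_contra! hno
  obtain ⟨c, hc⟩ := hchain.exists_isNearest hS hb hab.symm
  -- Following nearest neighbours, the distance drops at every step that is not mutual.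
  refine hchain.not_of_step (P := fun x y => x ∈ S ∧ IsNearest S x y) (fun x _ h => hS h.1)
    ?_ a c ⟨ha, hc⟩
  rintro x y ⟨hx, hxy⟩
  obtain ⟨z, hzS, hzy, hyz⟩ : ∃ z ∈ S, z ≠ y ∧ dist y z < dist x y := by
    have := hno x y hxy
    simp only [IsNearest, not_and, not_forall, not_le] at this
    obtain ⟨z, hzS, hzy, hlt⟩ := this hx hxy.2.1.symm
    exact ⟨z, hzS, hzy, by rwa [dist_comm x y]⟩
  obtain ⟨w, hw⟩ := hchain.exists_isNearest hS hzS hzy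
  exact ⟨w, ⟨hxy.1, hw⟩, (hw.2.2 z hzS hzy).trans_lt hyz⟩

section Matching

variable {R R' : Pt d → Pt d → Prop} {x y z : Pt d}

theorem IsMatching.symm (hR : IsMatching L R) (h : R x y) : R y x := hR.1 x y h

theorem IsMatching.left_mem (hR : IsMatching L R) (h : R x y) : x ∈ L := (hR.2.1 x y h).1

theorem IsMatching.right_mem (hR : IsMatching L R) (h : R x y) : y ∈ L := (hR.2.1 x y h).2.1

theorem IsMatching.ne (hR : IsMatching L R) (h : R x y) : x ≠ y := (hR.2.1 x y h).2.2

theorem IsMatching.unique (hR : IsMatching L R) (hy : R x y) (hz : R x z) : y = z :=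
  hR.2.2 x y z hy hz

theorem IsStable.exists_closer (hdist : DistinctDist L) (hR : IsMatching L R)
    (hs : IsStable L R) (hx : x ∈ L) (hy : y ∈ L) (hxy : x ≠ y) (hnot : ¬R x y) :
    (∃ z, R x z ∧ dist x z < dist x y) ∨ (∃ z, R y z ∧ dist y z < dist x y) := by
  by_contra! h
  refine hs ⟨x, hx, y, hy, hxy, hnot, fun z hxz => ?_, fun z hyz => ?_⟩
  · refine (h.1 z hxz).lt_of_ne (hdist.dist_ne_dist hx hy (hR.right_mem hxz) hxy
      (hR.ne hxz) ?_)
    rintro rfl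
    exact hnot hxz
  · rw [dist_comm x y]
    refine (dist_comm x y ▸ h.2 z hyz).lt_of_ne (hdist.dist_ne_dist hy hx (hR.right_mem hyz)
      hxy.symm (hR.ne hyz) ?_)
    rintro rfl
    exact hnot (hR.symm hyz)

def AlternatingEdge (R R' : Pt d → Pt d → Prop) (a b : Pt d) : Prop :=
  R a b ∧ ¬R' a b ∧ ∃ c, R' b c ∧ dist b c < dist a b

theorem AlternatingEdge.exists_next (hdist : DistinctDist L) (hR : IsMatching L R)
    (hR' : IsMatching L R') (hs : IsStable L R) (h : AlternatingEdge R R' x y) :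
    ∃ z, AlternatingEdge R' R y z ∧ dist y z < dist x y := by
  obtain ⟨hxy, hxy', z, hyz, hlt⟩ := h
  have hzx : z ≠ x := by
    rintro rfl
    exact hxy' (hR'.symm hyz)
  have hyz' : ¬R y z := fun h => hzx (hR.unique h (hR.symm hxy))
  refine ⟨z, ⟨hyz, hyz', ?_⟩, hlt⟩
  -- Stability of `R` at `yz`: `y` prefers `z` to `x`, so `z` must prefer its own partner.
  rcases hs.exists_closer hdist hR (hR'.left_mem hyz) (hR'.right_mem hyz) (hR'.ne hyz) hyz'
    with ⟨w, hyw, hw⟩ | hz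
  · obtain rfl := hR.unique hyw (hR.symm hxy)
    rw [dist_comm] at hw
    exact absurd hlt hw.not_gt
  · exact hz

theorem IsStable.le (hdist : DistinctDist L) (hchain : NoDescChain L) (hR : IsMatching L R)
    (hs : IsStable L R) (hR' : IsMatching L R') (hs' : IsStable L R') : R ≤ R' := by
  intro x y hxy
  by_contra hxy'
  -- Alternating edges would continue forever, with strictly decreasing lengths.
  have hno := hchain.not_of_step
    (P := fun a b => AlternatingEdge R R' a b ∨ AlternatingEdge R' R a b)
    (fun a b h => h.elim (fun h => hR.left_mem h.1) (fun h => hR'.left_mem h.1)) (by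
      rintro a b (h | h)
      · obtain ⟨c, hc, hlt⟩ := h.exists_next hdist hR hR' hs
        exact ⟨c, Or.inr hc, hlt⟩
      · obtain ⟨c, hc, hlt⟩ := h.exists_next hdist hR' hR hs'
        exact ⟨c, Or.inl hc, hlt⟩)
  rcases hs'.exists_closer hdist hR' (hR.left_mem hxy) (hR.right_mem hxy) (hR.ne hxy) hxy' with
    ⟨z, hxz, hz⟩ | ⟨z, hyz, hz⟩
  · exact hno y x (Or.inl ⟨hR.symm hxy, fun h => hxy' (hR'.symm h), z, hxz, dist_comm x y ▸ hz⟩)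
  · exact hno x y (Or.inl ⟨hxy, hxy', z, hyz, hz⟩)

end Matching

theorem sSup_apply_apply_iff {α β : Type*} {c : Set (α → β → Prop)} {x : α} {y : β} :
    sSup c x y ↔ ∃ R ∈ c, R x y := by
  simp only [sSup_apply, iSup_apply, iSup_Prop_eq, Subtype.exists, exists_prop]

section Existence

variable {c : Set (Pt d → Pt d → Prop)} {R : Pt d → Pt d → Prop} {a b w : Pt d}

/-- When distances are distinct: no blocking pair contains a matched point. -/
def IsStableAtMatched (L : Set (Pt d)) (R : Pt d → Pt d → Prop) : Prop :=
  ∀ ⦃x y z⦄, R x y → z ∈ L → z ≠ x → dist x z < dist x y → ∃ w, R z w ∧ dist z w < dist x z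

def unmatched (L : Set (Pt d)) (R : Pt d → Pt d → Prop) : Set (Pt d) := {x ∈ L | ∀ y, ¬R x y}

def insertPair (R : Pt d → Pt d → Prop) (a b : Pt d) : Pt d → Pt d → Prop :=
  fun x y => R x y ∨ (x = a ∧ y = b) ∨ (x = b ∧ y = a)

theorem IsStableAtMatched.isStable (hQ : IsStableAtMatched L R)
    (hU : (unmatched L R).Subsingleton) : IsStable L R := by
  rintro ⟨x, hx, y, hy, hxy, -, hbx, hby⟩
  have hxU : x ∈ unmatched L R := ⟨hx, fun z hxz => by
    obtain ⟨w, hyw, hw⟩ := hQ hxz hy hxy.symm (hbx z hxz)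
    exact (hby w hyw).not_gt hw⟩
  have hyU : y ∈ unmatched L R := ⟨hy, fun z hyz => by
    obtain ⟨w, hxw, hw⟩ := hQ hyz hx hxy (dist_comm x y ▸ hby z hyz)
    exact (hbx w hxw).not_gt (dist_comm x y ▸ hw)⟩
  exact hxy (hU hxU hyU)

theorem IsStableAtMatched.dist_lt_of_mem_unmatched (hdist : DistinctDist L)
    (hR : IsMatching L R) (hQ : IsStableAtMatched L R) (hzw : R z w)
    (ha : a ∈ unmatched L R) (haz : a ≠ z) : dist z w < dist z a := by
  have hwa : w ≠ a := by
    rintro rfl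
    exact ha.2 z (hR.symm hzw)
  refine lt_of_le_of_ne (not_lt.1 fun h => ?_)
    (hdist.dist_ne_dist (hR.left_mem hzw) (hR.right_mem hzw) ha.1 (hR.ne hzw) haz.symm hwa)
  obtain ⟨v, hav, -⟩ := hQ hzw ha.1 haz h
  exact ha.2 v hav

theorem isMatching_insertPair (hR : IsMatching L R) (ha : a ∈ unmatched L R)
    (hb : b ∈ unmatched L R) (hab : a ≠ b) : IsMatching L (insertPair R a b) := by
  refine ⟨?_, ?_, ?_⟩
  · rintro x y (h | ⟨rfl, rfl⟩ | ⟨rfl, rfl⟩)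
    exacts [Or.inl (hR.symm h), Or.inr (Or.inr ⟨rfl, rfl⟩), Or.inr (Or.inl ⟨rfl, rfl⟩)]
  · rintro x y (h | ⟨rfl, rfl⟩ | ⟨rfl, rfl⟩)
    exacts [⟨hR.left_mem h, hR.right_mem h, hR.ne h⟩, ⟨ha.1, hb.1, hab⟩, ⟨hb.1, ha.1, hab.symm⟩]
  · rintro x y z (h | ⟨rfl, rfl⟩ | ⟨rfl, rfl⟩) (h' | ⟨h₁, rfl⟩ | ⟨h₁, rfl⟩)
    · exact hR.unique h h'
    all_goals simp_all [unmatched]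

theorem isStableAtMatched_insertPair (hdist : DistinctDist L) (hR : IsMatching L R)
    (hQ : IsStableAtMatched L R) (hab : IsNearest (unmatched L R) a b)
    (hba : IsNearest (unmatched L R) b a) : IsStableAtMatched L (insertPair R a b) := by
  have hnew : ∀ {u v}, IsNearest (unmatched L R) v u → IsNearest (unmatched L R) u v →
      ∀ z ∈ L, z ≠ u → dist u z < dist u v → ∃ w, insertPair R a b z w ∧ dist z w < dist u z := by
    intro u v hu huv z hz hzu hlt
    obtain ⟨w, hzw⟩ : ∃ w, R z w := by
      by_contra! hfree
      exact (huv.2.2 z ⟨hz, hfree⟩ hzu).not_gt hlt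
    exact ⟨w, Or.inl hzw, dist_comm u z ▸ hQ.dist_lt_of_mem_unmatched hdist hR hzw hu.1 hzu.symm⟩
  rintro x y z (hxy | ⟨rfl, rfl⟩ | ⟨rfl, rfl⟩) hz hzx hlt
  · obtain ⟨w, hzw, hw⟩ := hQ hxy hz hzx hlt
    exact ⟨w, Or.inl hzw, hw⟩
  · exact hnew hba hab z hz hzx hlt
  · exact hnew hab hba z hz hzx hlt

theorem IsChain.isMatching_sSup (hc : IsChain (· ≤ ·) c) (h : ∀ R ∈ c, IsMatching L R) :
    IsMatching L (sSup c) := by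
  simp only [IsMatching, sSup_apply_apply_iff]
  refine ⟨?_, ?_, ?_⟩
  · rintro x y ⟨R, hR, hxy⟩
    exact ⟨R, hR, (h R hR).symm hxy⟩
  · rintro x y ⟨R, hR, hxy⟩
    exact ⟨(h R hR).left_mem hxy, (h R hR).right_mem hxy, (h R hR).ne hxy⟩
  · rintro x y z ⟨R, hR, hxy⟩ ⟨R', hR', hxz⟩
    rcases hc.total hR hR' with hle | hle
    · exact (h R' hR').unique (hle x y hxy) hxz
    · exact (h R hR).unique hxy (hle x z hxz)

theorem isStableAtMatched_sSup (h : ∀ R ∈ c, IsStableAtMatched L R) :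
    IsStableAtMatched L (sSup c) := by
  simp only [IsStableAtMatched, sSup_apply_apply_iff]
  rintro x y z ⟨R, hR, hxy⟩ hz hzx hlt
  obtain ⟨w, hzw, hw⟩ := h R hR hxy hz hzx hlt
  exact ⟨w, ⟨R, hR, hzw⟩, hw⟩

theorem exists_isMatching_isStable (hdist : DistinctDist L) (hchain : NoDescChain L) :
    ∃ R, IsMatching L R ∧ IsStable L R := by
  obtain ⟨R, ⟨hR, hQ⟩, hmax⟩ := zorn_le₀ {R | IsMatching L R ∧ IsStableAtMatched L R}
    fun c hcs hc => ⟨sSup c, ⟨hc.isMatching_sSup fun R hR => (hcs hR).1,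
      isStableAtMatched_sSup fun R hR => (hcs hR).2⟩, fun _ => le_sSup⟩
  refine ⟨R, hR, hQ.isStable fun x hx y hy => ?_⟩
  by_contra hxy
  -- Otherwise a mutually nearest pair of unmatched points could be added to `R`.
  obtain ⟨a, b, hab, hba⟩ := hchain.exists_isNearest_pair (fun _ h => h.1) hx hy hxy
  have hle := hmax ⟨isMatching_insertPair hR hba.1 hab.1 hab.2.1.symm,
    isStableAtMatched_insertPair hdist hR hQ hab hba⟩ fun _ _ h => Or.inl h
  exact hba.1.2 b (hle a b (Or.inr (Or.inl ⟨rfl, rfl⟩)))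

end Existence

/-- a set with distinct distances and no infinite descending chains has a
unique stable matching. -/
theorem exists_unique_stable_matching {d : ℕ} (L : Set (Pt d))
    (hdist : DistinctDist L) (hchain : NoDescChain L) :
    ∃! R : Pt d → Pt d → Prop, IsMatching L R ∧ IsStable L R := by
  obtain ⟨R, hR, hs⟩ := exists_isMatching_isStable hdist hchain
  exact ⟨R, ⟨hR, hs⟩, fun R' ⟨hR', hs'⟩ =>
    le_antisymm (hs'.le hdist hchain hR' hR hs) (hs.le hdist hchain hR hR' hs')⟩
end
end

section
/- Let L ⊆ ℝ^d be a set with no infinite descending chains. Then L is discrete in the sense of being locally finite: every bounded subset of ℝ^d contains only finitely many points of L. -/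
/-!
An infinite bounded set in `ℝ^d` has an accumulation point `p`. Choosing points of `L` whose
distances `rₙ` to `p` shrink by a factor of more than three at each step, the triangle inequality
gives `|xₙ₊₁ - xₙ₊₂| ≤ rₙ₊₁ + rₙ₊₂ < 4rₙ₊₁/3 ≤ 2rₙ₊₁ < rₙ - rₙ₊₁ ≤ |xₙ - xₙ₊₁|`,
so these points form an infinite descending chain.
-/

noncomputable section

open Filter Set

theorem strictAnti_dist_succ_of_dist_lt_div_three {α : Type*} [PseudoMetricSpace α]
    {c : ℕ → α} {p : α} (hc : ∀ n, dist (c (n + 1)) p < dist (c n) p / 3) :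
    StrictAnti fun n => dist (c n) (c (n + 1)) := by
  refine strictAnti_nat_of_succ_lt fun n => ?_
  have h₁ := hc n
  have h₂ := hc (n + 1)
  have hnext := dist_triangle_right (c (n + 1)) (c (n + 2)) p
  have hprev := dist_triangle (c n) (c (n + 1)) p
  have hr := dist_nonneg (x := c (n + 1)) (y := p)
  linarith

theorem AccPt.exists_seq_dist_lt_div_three {α : Type*} [MetricSpace α] {L : Set α} {p : α}
    (hp : AccPt p (𝓟 L)) :
    ∃ c : ℕ → α, (∀ n, c n ∈ L) ∧ ∀ n, dist (c (n + 1)) p < dist (c n) p / 3 := by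
  have near : ∀ ε > 0, ∃ x ∈ L, 0 < dist x p ∧ dist x p < ε := fun ε hε => by
    obtain ⟨x, ⟨hxε, hxL⟩, hxp⟩ := accPt_iff_nhds.1 hp _ (Metric.ball_mem_nhds p hε)
    exact ⟨x, hxL, dist_pos.2 hxp, hxε⟩
  have step : ∀ x : {x // x ∈ L ∧ 0 < dist x p},
      ∃ y : {x // x ∈ L ∧ 0 < dist x p}, dist y.1 p < dist x.1 p / 3 := fun x => by
    obtain ⟨y, hyL, hy, hyx⟩ := near _ (div_pos x.2.2 three_pos)
    exact ⟨⟨y, hyL, hy⟩, hyx⟩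
  choose next hnext using step
  obtain ⟨x₀, hx₀L, hx₀, -⟩ := near 1 one_pos
  refine ⟨fun n => (next^[n] ⟨x₀, hx₀L, hx₀⟩).1, fun n => (next^[n] _).2.1, fun n => ?_⟩
  simp only [Function.iterate_succ_apply']
  exact hnext _

/-- a set with no infinite descending chains is locally finite: every bounded
subset of `ℝ^d` contains only finitely many of its points. -/
theorem noDescChain_locallyFinite {d : ℕ} (L : Set (Pt d)) (hchain : NoDescChain L) :
    ∀ S : Set (Pt d), Bornology.IsBounded S → (L ∩ S).Finite := by
  intro S hS
  by_contra hinf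
  obtain ⟨p, -, hp⟩ := Set.Infinite.exists_accPt_of_subset_isCompact hinf hS.isCompact_closure
    fun x hx => subset_closure hx.2
  obtain ⟨c, hcL, hc⟩ := (hp.mono (principal_mono.2 inter_subset_left)).exists_seq_dist_lt_div_three
  exact hchain ⟨c, hcL, strictAnti_dist_succ_of_dist_lt_div_three hc⟩
end
end

section
/- Let L ⊆ ℝ^d have no infinite descending chains. Then the friendly frogs move relation on two-frog positions is well-founded: there is no infinite sequence of positions {x_0,y_0}, {x_1,y_1}, … in which each position is obtained from the previous one by a legal move. -/
/-!
Let `x n` be the frog that stays put during the `n`-th move and `y n` the other one. The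
distances `dist (x n) (y n)` strictly decrease, and whenever the staying frog changes, the old
one has just jumped next to the new one. If the staying frog changes infinitely often, the
successive staying frogs form a descending chain. Otherwise one frog eventually stays forever,
and the other visits infinitely many points of a bounded set; near an accumulation point of
these one finds points whose distances to it shrink by a factor 4 at each step, and they form
a descending chain.
-/

noncomputable section

/-- The friendly frogs move relation on two-frog positions, which are unordered pairs of
distinct points of `L`: one of the two points is replaced by a point `z ∈ L` outside the
pair in such a way that the distance between the occupied points strictly decreases. -/
def FFMove {d : ℕ} (L : Set (Pt d)) (p q : Sym2 (Pt d)) : Prop :=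
  ∃ x y z, x ∈ L ∧ y ∈ L ∧ z ∈ L ∧ x ≠ y ∧ z ≠ x ∧ z ≠ y ∧
    dist x z < dist x y ∧ p = s(x, y) ∧ q = s(x, z)

open Set Filter Topology Metric

theorem Nat.apply_nth_succ_eq_apply_nth_add_one {α : Type*} {f : ℕ → α}
    (hf : {n | f (n + 1) ≠ f n}.Infinite) (j : ℕ) :
    f (Nat.nth (fun n => f (n + 1) ≠ f n) (j + 1)) =
      f (Nat.nth (fun n => f (n + 1) ≠ f n) j + 1) := by
  set t := Nat.nth (fun n => f (n + 1) ≠ f n)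
  have hconst : ∀ k, t j + 1 ≤ k → k ≤ t (j + 1) → f k = f (t j + 1) := by
    intro k hk
    induction k, hk using Nat.le_induction with
    | base => exact fun _ => rfl
    | succ k hk ih =>
      intro hle
      have hstay : f (k + 1) = f k := by
        by_contra hne
        have : k ≤ t j := Nat.le_nth_of_lt_nth_succ (show k < t (j + 1) by omega) hne
        omega
      rw [hstay, ih (by omega)]
  exact hconst _ (Nat.nth_strictMono hf (Nat.lt_succ_self j)) le_rfl

section DescendingChains

variable {α : Type*} [MetricSpace α]

theorem strictAnti_dist_succ_of_dist_lt_quarter {c : ℕ → α} {b : α}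
    (hc : ∀ n, dist (c (n + 1)) b < dist (c n) b / 4) :
    StrictAnti fun n => dist (c n) (c (n + 1)) := by
  refine strictAnti_nat_of_succ_lt fun n => ?_
  have hupper := dist_triangle_right (c (n + 1)) (c (n + 2)) b
  have hlower : dist (c n) b - dist (c (n + 1)) b ≤ dist (c n) (c (n + 1)) :=
    (le_abs_self _).trans (abs_dist_sub_le _ _ _)
  linarith [hc n, hc (n + 1), dist_nonneg (x := c (n + 1)) (y := b)]

theorem AccPt.exists_strictAnti_dist {S : Set α} {b : α} (hb : AccPt b (𝓟 S)) :
    ∃ c : ℕ → α, (∀ n, c n ∈ S) ∧ StrictAnti fun n => dist (c n) (c (n + 1)) := by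
  obtain ⟨c, hcS, hc⟩ := exists_seq_of_forall_finset_exists (fun q => q ∈ S ∧ q ≠ b)
    (fun q q' => dist q' b < dist q b / 4) fun s hs => by
      have hnear : ∀ᶠ y in 𝓝 b, ∀ q ∈ s, dist y b < dist q b / 4 :=
        (Finset.eventually_all s).2 fun q hq =>
          ball_mem_nhds b (by have := dist_pos.2 (hs q hq).2; positivity)
      obtain ⟨y, ⟨hyb, hyS⟩, hy⟩ := ((accPt_iff_frequently.1 hb).and_eventually hnear).exists
      exact ⟨y, ⟨hyS, hyb⟩, hy⟩
  exact ⟨c, fun n => (hcS n).1,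
    strictAnti_dist_succ_of_dist_lt_quarter fun n => hc n (n + 1) (Nat.lt_succ_self n)⟩

theorem Set.Infinite.exists_strictAnti_dist [ProperSpace α] {S : Set α} (hS : S.Infinite)
    (hSb : Bornology.IsBounded S) :
    ∃ c : ℕ → α, (∀ n, c n ∈ S) ∧ StrictAnti fun n => dist (c n) (c (n + 1)) := by
  obtain ⟨b, -, hb⟩ := hS.exists_accPt_of_subset_isCompact hSb.isCompact_closure subset_closure
  exact hb.exists_strictAnti_dist

theorem exists_strictAnti_dist_of_infinite_setOf_ne {x y : ℕ → α}
    (hD : StrictAnti fun n => dist (x n) (y n)) (hswap : ∀ n, x (n + 1) = x n ∨ y (n + 1) = x n)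
    (hmoves : {n | x (n + 1) ≠ x n}.Infinite) :
    ∃ c : ℕ → α, (∀ n, c n ∈ range x) ∧ StrictAnti fun n => dist (c n) (c (n + 1)) := by
  set t := Nat.nth fun n => x (n + 1) ≠ x n
  have hmove : ∀ j, dist (x (t j)) (x (t j + 1)) = dist (x (t j + 1)) (y (t j + 1)) := fun j => by
    have hne : x (t j + 1) ≠ x (t j) := Nat.nth_mem_of_infinite hmoves j
    rw [(hswap (t j)).resolve_left hne, dist_comm]
  refine ⟨fun j => x (t j), fun j => mem_range_self _, ?_⟩
  simp only [Nat.apply_nth_succ_eq_apply_nth_add_one hmoves, t, hmove]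
  exact hD.comp_strictMono ((strictMono_id.add_const 1).comp (Nat.nth_strictMono hmoves))

theorem exists_strictAnti_dist_of_eventually_const [ProperSpace α] {x y : ℕ → α} {N : ℕ}
    (hD : StrictAnti fun n => dist (x n) (y n)) (hconst : ∀ n ≥ N, x n = x N) :
    ∃ c : ℕ → α, (∀ n, c n ∈ range y) ∧ StrictAnti fun n => dist (c n) (c (n + 1)) := by
  have hdist : ∀ n ≥ N, dist (x N) (y n) = dist (x n) (y n) := fun n hn => by rw [hconst n hn]
  have hinj : InjOn y (Ici N) := fun m hm n hn hmn =>
    hD.injective (by rw [← hdist m hm, ← hdist n hn, hmn])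
  have hbdd : y '' Ici N ⊆ closedBall (x N) (dist (x N) (y N)) := by
    rintro _ ⟨n, hn, rfl⟩
    rw [mem_closedBall, dist_comm, hdist n hn]
    exact hD.antitone hn
  obtain ⟨c, hc, hanti⟩ :=
    ((Ici_infinite N).image hinj).exists_strictAnti_dist (isBounded_closedBall.subset hbdd)
  exact ⟨c, fun n => image_subset_range _ _ (hc n), hanti⟩

theorem exists_strictAnti_dist_of_stay_or_swap [ProperSpace α] {x y : ℕ → α}
    (hD : StrictAnti fun n => dist (x n) (y n)) (hswap : ∀ n, x (n + 1) = x n ∨ y (n + 1) = x n) :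
    ∃ c : ℕ → α, (∀ n, c n ∈ range x ∪ range y) ∧ StrictAnti fun n => dist (c n) (c (n + 1)) := by
  by_cases hmoves : {n | x (n + 1) ≠ x n}.Infinite
  · obtain ⟨c, hc, hanti⟩ := exists_strictAnti_dist_of_infinite_setOf_ne hD hswap hmoves
    exact ⟨c, fun n => Or.inl (hc n), hanti⟩
  · obtain ⟨N, hN⟩ := (not_infinite.1 hmoves).bddAbove
    have hstay : ∀ n, N + 1 ≤ n → x n = x (n + 1) := fun n hn => by
      by_contra hne
      have : n ≤ N := hN (Ne.symm hne)
      omega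
    have hconst : ∀ n ≥ N + 1, x n = x (N + 1) := fun n hn =>
      (Nat.rel_of_forall_rel_succ_of_le_of_le (· = ·) hstay le_rfl hn).symm
    obtain ⟨c, hc, hanti⟩ := exists_strictAnti_dist_of_eventually_const hD hconst
    exact ⟨c, fun n => Or.inr (hc n), hanti⟩

end DescendingChains

theorem FFMove.exists_stay_or_swap {d : ℕ} {L : Set (Pt d)} {p : ℕ → Sym2 (Pt d)}
    (hp : ∀ n, FFMove L (p n) (p (n + 1))) :
    ∃ x y : ℕ → Pt d, (∀ n, x n ∈ L) ∧ (∀ n, y n ∈ L) ∧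
      (StrictAnti fun n => dist (x n) (y n)) ∧ ∀ n, x (n + 1) = x n ∨ y (n + 1) = x n := by
  choose x y z hx hy _ _ _ _ hlt hp hp' using hp
  have hnext : ∀ n, s(x (n + 1), y (n + 1)) = s(x n, z n) := fun n =>
    (hp (n + 1)).symm.trans (hp' n)
  have hdist : ∀ n, dist (x (n + 1)) (y (n + 1)) = dist (x n) (z n) := fun n => by
    rcases Sym2.eq_iff.1 (hnext n) with ⟨h1, h2⟩ | ⟨h1, h2⟩
    · rw [h1, h2]
    · rw [h1, h2, dist_comm]
  refine ⟨x, y, hx, hy, strictAnti_nat_of_succ_lt fun n => (hdist n).trans_lt (hlt n), fun n => ?_⟩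
  rcases Sym2.eq_iff.1 (hnext n) with ⟨h, -⟩ | ⟨-, h⟩
  exacts [Or.inl h, Or.inr h]

/-- if `L` has no infinite descending chains then the friendly frogs move
relation on two-frog positions admits no infinite sequence of consecutive legal moves. -/
theorem ffMove_no_infinite_play {d : ℕ} (L : Set (Pt d)) (hchain : NoDescChain L) :
    ¬ ∃ p : ℕ → Sym2 (Pt d), ∀ n, FFMove L (p n) (p (n + 1)) := by
  rintro ⟨p, hp⟩
  obtain ⟨x, y, hx, hy, hD, hswap⟩ := FFMove.exists_stay_or_swap hp
  obtain ⟨c, hc, hanti⟩ := exists_strictAnti_dist_of_stay_or_swap hD hswap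
  refine hchain ⟨c, fun n => ?_, hanti⟩
  rcases hc n with ⟨k, hk⟩ | ⟨k, hk⟩
  exacts [hk ▸ hx k, hk ▸ hy k]
end
end

section
/- Let k ≥ 1 and let L ⊂ ℝ^d have distinct distances and no infinite descending chains, and assume that the unique stable (k+1)-matching M of L is perfect (every point has exactly k+1 partners). In k-stone colored friendly frogs on L, a position (x, y, S) — where x is the previous player's frog, y is the frog of the player about to move, and S is the set of k points blocked by stones — is a P-position if and only if x desires y (i.e., |x − y| ≤ D(x)) and every partner z of x in M with |x − z| < |x − y| belongs to S. -/
/-!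
The claimed P-positions form a kernel of the move digraph: no move joins two of them, and from
every other position some move reaches one. As play always terminates, that kernel is the set
of P-positions. Both properties come from stability. If `z` is a partner of `x` closer than `y`
and not under a stone, jumping to `z` and covering the other `k` partners of `z` reaches a
claimed P-position. Conversely, if `x` desires `y` and the jump goes to a non-partner `z` with
`|x - z| < |x - y|`, then `D(x) > |x - z|`, so stability forces every partner of `z` to be closer
to `z` than `x` is; one of these `k + 1` partners escapes any `k` stones.
-/

noncomputable section

/-- `R` encodes an `m`-matching of `L` (as the symmetric relation "matched to"): a set of
unordered pairs of distinct points of `L` in which each point lies in at most `m` pairs. -/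
def IsMMatching {d : ℕ} (m : ℕ) (L : Set (Pt d)) (R : Pt d → Pt d → Prop) : Prop :=
  (∀ x y, R x y → R y x) ∧
  (∀ x y, R x y → x ∈ L ∧ y ∈ L ∧ x ≠ y) ∧
  (∀ x : Pt d, {y | R x y}.Finite ∧ {y | R x y}.ncard ≤ m)

/-- `D(x) > r` for the `m`-matching `R`, where `D(x)` is the distance from `x` to its most
distant partner, and `D(x) = ∞` if `x` has strictly fewer than `m` partners. -/
def DGt {d : ℕ} (m : ℕ) (R : Pt d → Pt d → Prop) (x : Pt d) (r : ℝ) : Prop :=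
  {y | R x y}.ncard < m ∨ ∃ z, R x z ∧ r < dist x z

/-- `|x − y| ≤ D(x)` for the `m`-matching `R`: `x` desires `y`. -/
def Desires {d : ℕ} (m : ℕ) (R : Pt d → Pt d → Prop) (x y : Pt d) : Prop :=
  {z | R x z}.ncard < m ∨ ∃ z, R x z ∧ dist x y ≤ dist x z

/-- The `m`-matching `R` of `L` is stable: there are no distinct `x, y ∈ L`, not matched to
each other, with `D(x) > |x − y|` and `D(y) > |x − y|`. -/
def IsMStable {d : ℕ} (m : ℕ) (L : Set (Pt d)) (R : Pt d → Pt d → Prop) : Prop :=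
  ¬ ∃ x ∈ L, ∃ y ∈ L, x ≠ y ∧ ¬ R x y ∧ DGt m R x (dist x y) ∧ DGt m R y (dist x y)

/-- A valid position of `k`-stone colored friendly frogs on `L`: the two frogs are at
distinct points of `L` and the stones occupy a set of exactly `k` points of `L`. -/
def KStonePos {d : ℕ} (k : ℕ) (L : Set (Pt d)) (p : Pt d × Pt d × Finset (Pt d)) : Prop :=
  p.1 ∈ L ∧ p.2.1 ∈ L ∧ p.1 ≠ p.2.1 ∧ ↑p.2.2 ⊆ L ∧ p.2.2.card = k

/-- The move relation of `k`-stone colored friendly frogs on `L`.  A position is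
`(x, y, S)` where `x` is the previous player's frog, `y` is the frog of the player about
to move, and `S` is the set of `k` stones placed by the previous player.  A move consists
of choosing `z ∈ L \ (S ∪ {x, y})` with `dist z x < dist x y` together with a new set
`S' ⊆ L` of exactly `k` stones, resulting in `(z, x, S')`. -/
def KStoneMove {d : ℕ} (k : ℕ) (L : Set (Pt d))
    (p q : Pt d × Pt d × Finset (Pt d)) : Prop :=
  ∃ x y S z S', p = (x, y, S) ∧ q = (z, x, S') ∧
    x ∈ L ∧ y ∈ L ∧ x ≠ y ∧ ↑S ⊆ L ∧ S.card = k ∧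
    z ∈ L ∧ z ∉ S ∧ z ≠ x ∧ z ≠ y ∧ dist z x < dist x y ∧
    ↑S' ⊆ L ∧ S'.card = k

theorem iff_of_wellFounded_kernel {α : Type*} {move : α → α → Prop} {Pos P Q : α → Prop}
    (hwf : WellFounded (flip move)) (hPos : ∀ p q, move p q → Pos q)
    (hP : ∀ p, Pos p → (P p ↔ ∀ q, move p q → ¬ P q))
    (hQ_indep : ∀ p q, Q p → move p q → ¬ Q q)
    (hQ_absorb : ∀ p, Pos p → ¬ Q p → ∃ q, move p q ∧ Q q) :
    ∀ p, Pos p → (P p ↔ Q p) := by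
  intro p
  induction p using hwf.induction with
  | h p ih =>
    intro hp
    have hPQ : ∀ q, move p q → (P q ↔ Q q) := fun q hq => ih q hq (hPos p q hq)
    rw [hP p hp]
    constructor
    · intro hnoP
      by_contra hQ
      obtain ⟨q, hq, hQq⟩ := hQ_absorb p hp hQ
      exact hnoP q hq ((hPQ q hq).2 hQq)
    · intro hQ q hq hPq
      exact hQ_indep p q hQ hq ((hPQ q hq).1 hPq)

section KStone

variable {d k : ℕ} {L : Set (Pt d)} {R : Pt d → Pt d → Prop}

theorem KStoneMove.kStonePos_right {p q : Pt d × Pt d × Finset (Pt d)}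
    (h : KStoneMove k L p q) : KStonePos k L q := by
  obtain ⟨x, y, S, z, S', -, rfl, hx, -, -, -, -, hz, -, hzx, -, -, hS'L, hS'⟩ := h
  exact ⟨hz, hx, hzx, hS'L, hS'⟩

theorem KStoneMove.kStonePos_left {p q : Pt d × Pt d × Finset (Pt d)}
    (h : KStoneMove k L p q) : KStonePos k L p := by
  obtain ⟨x, y, S, z, S', rfl, -, hx, hy, hxy, hSL, hS, -⟩ := h
  exact ⟨hx, hy, hxy, hSL, hS⟩

theorem KStoneMove.snd_eq_fst {p q : Pt d × Pt d × Finset (Pt d)}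
    (h : KStoneMove k L p q) : q.2.1 = p.1 := by
  obtain ⟨x, y, S, z, S', rfl, rfl, -⟩ := h
  rfl

theorem KStoneMove.dist_lt {p q : Pt d × Pt d × Finset (Pt d)}
    (h : KStoneMove k L p q) : dist q.1 q.2.1 < dist p.1 p.2.1 := by
  obtain ⟨x, y, S, z, S', rfl, rfl, -, -, -, -, -, -, -, -, -, hlt, -⟩ := h
  exact hlt

theorem wellFounded_flip_kStoneMove (hchain : NoDescChain L) :
    WellFounded (flip (KStoneMove k L)) := by
  rw [wellFounded_iff_isEmpty_descending_chain]
  refine ⟨fun ⟨f, hf⟩ => hchain ⟨fun n => (f n).2.1, fun n => (hf n).kStonePos_left.2.1, ?_⟩⟩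
  have hdist : ∀ n, dist (f n).2.1 (f (n + 1)).2.1 = dist (f n).1 (f n).2.1 := fun n => by
    rw [(hf n).snd_eq_fst, dist_comm]
  refine strictAnti_nat_of_succ_lt fun n => ?_
  simp only [hdist]
  exact (hf n).dist_lt

def KStoneKernel (k : ℕ) (R : Pt d → Pt d → Prop) (p : Pt d × Pt d × Finset (Pt d)) : Prop :=
  Desires (k + 1) R p.1 p.2.1 ∧ ∀ z, R p.1 z → dist p.1 z < dist p.1 p.2.1 → z ∈ p.2.2

theorem IsMStable.dist_lt_of_not_rel {m : ℕ} (hS : IsMStable m L R) (hM : IsMMatching m L R)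
    (hdist : DistinctDist L) {x z w : Pt d} (hx : x ∈ L) (hz : z ∈ L) (hzx : z ≠ x)
    (hxz : ¬ R x z) (hDx : DGt m R x (dist x z)) (hzw : R z w) : dist z w < dist z x := by
  have hDz : ¬ DGt m R z (dist x z) := fun hDz => hS ⟨x, hx, z, hz, hzx.symm, hxz, hDx, hDz⟩
  have hle : dist z w ≤ dist z x := by
    rw [dist_comm z x]
    by_contra! h
    exact hDz (Or.inr ⟨w, hzw, h⟩)
  refine hle.lt_of_ne fun heq => ?_
  obtain ⟨-, hw, hzw'⟩ := hM.2.1 z w hzw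
  rcases hdist z hz w hw z hz x hx hzw' hzx heq with ⟨-, rfl⟩ | ⟨rfl, -⟩
  · exact hxz (hM.1 z w hzw)
  · exact hzx rfl

theorem exists_partner_notMem (hperf : ∀ x ∈ L, {y | R x y}.ncard = k + 1) {x : Pt d}
    (hx : x ∈ L) {S : Finset (Pt d)} (hS : S.card = k) : ∃ w, R x w ∧ w ∉ S :=
  Set.exists_mem_notMem_of_ncard_lt_ncard (s := (S : Set (Pt d))) (t := {w | R x w})
    (by rw [Set.ncard_coe_finset, hperf x hx]; omega)

/-- Jump to `z` and place the stones on the other `k` partners of `z`. -/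
theorem exists_kStoneMove_kernel_of_partner (hM : IsMMatching (k + 1) L R)
    (hperf : ∀ x ∈ L, {y | R x y}.ncard = k + 1) {x y z : Pt d} {S : Finset (Pt d)}
    (hp : KStonePos k L (x, y, S)) (hxz : R x z) (hzS : z ∉ S) (hlt : dist x z < dist x y) :
    ∃ q, KStoneMove k L (x, y, S) q ∧ KStoneKernel k R q := by
  obtain ⟨hx, hy, hxy, hSL, hS⟩ := hp
  obtain ⟨-, hz, hxz'⟩ := hM.2.1 x z hxz
  set T := (hM.2.2 z).1.toFinset
  have hxT : x ∈ T := (Set.Finite.mem_toFinset _).2 (hM.1 x z hxz)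
  have hT : T.card = k + 1 := by
    rw [← Set.ncard_eq_toFinset_card _ (hM.2.2 z).1, hperf z hz]
  refine ⟨(z, x, T.erase x), ⟨x, y, S, z, T.erase x, rfl, rfl, hx, hy, hxy, hSL, hS, hz, hzS,
    hxz'.symm, ?_, by rwa [dist_comm], ?_, ?_⟩, Or.inr ⟨x, hM.1 x z hxz, le_rfl⟩, ?_⟩
  · rintro rfl
    exact hlt.false
  · intro w hw
    exact (hM.2.1 z w ((Set.Finite.mem_toFinset _).1 (Finset.mem_of_mem_erase hw))).2.1
  · rw [Finset.card_erase_of_mem hxT, hT, Nat.add_sub_cancel]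
  · intro w hzw hwlt
    exact Finset.mem_erase.2 ⟨by rintro rfl; exact hwlt.false, (Set.Finite.mem_toFinset _).2 hzw⟩

theorem exists_kStoneMove_kernel (hM : IsMMatching (k + 1) L R)
    (hperf : ∀ x ∈ L, {y | R x y}.ncard = k + 1) {p : Pt d × Pt d × Finset (Pt d)}
    (hp : KStonePos k L p) (hnp : ¬ KStoneKernel k R p) :
    ∃ q, KStoneMove k L p q ∧ KStoneKernel k R q := by
  obtain ⟨x, y, S⟩ := p
  obtain ⟨z, hxz, hzS, hlt⟩ : ∃ z, R x z ∧ z ∉ S ∧ dist x z < dist x y := by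
    by_cases hdes : Desires (k + 1) R x y
    · by_contra! h
      exact hnp ⟨hdes, fun z hxz hlt => by_contra fun hzS => (h z hxz hzS).not_gt hlt⟩
    · obtain ⟨z, hxz, hzS⟩ := exists_partner_notMem hperf hp.1 hp.2.2.2.2
      refine ⟨z, hxz, hzS, ?_⟩
      by_contra! h
      exact hdes (Or.inr ⟨z, hxz, h⟩)
  exact exists_kStoneMove_kernel_of_partner hM hperf hp hxz hzS hlt

theorem not_kStoneKernel_of_kStoneMove (hM : IsMMatching (k + 1) L R)
    (hS : IsMStable (k + 1) L R) (hdist : DistinctDist L)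
    (hperf : ∀ x ∈ L, {y | R x y}.ncard = k + 1) {p q : Pt d × Pt d × Finset (Pt d)}
    (hp : KStoneKernel k R p) (hpq : KStoneMove k L p q) : ¬ KStoneKernel k R q := by
  obtain ⟨x, y, S, z, S', rfl, rfl, hx, -, -, -, -, hz, hzS, hzx, -, hlt, -, hS'⟩ := hpq
  obtain ⟨hdes, hblocked⟩ := hp
  rw [dist_comm] at hlt
  have hxz : ¬ R x z := fun hxz => hzS (hblocked z hxz hlt)
  obtain ⟨v, hxv, hyv⟩ := hdes.resolve_left (by simp [hperf x hx])
  have hDx : DGt (k + 1) R x (dist x z) := Or.inr ⟨v, hxv, hlt.trans_le hyv⟩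
  obtain ⟨w, hzw, hwS'⟩ := exists_partner_notMem hperf hz hS'
  exact fun hq => hwS' (hq.2 w hzw (hS.dist_lt_of_not_rel hM hdist hx hz hzx hxz hDx hzw))

end KStone

theorem kstone_ppositions_general {d : ℕ} (k : ℕ) (L : Set (Pt d))
    (hdist : DistinctDist L) (hchain : NoDescChain L)
    (R : Pt d → Pt d → Prop) (hM : IsMMatching (k + 1) L R) (hS : IsMStable (k + 1) L R)
    (hperf : ∀ x ∈ L, {y | R x y}.ncard = k + 1)
    (P : Pt d × Pt d × Finset (Pt d) → Prop)
    (hP : ∀ p, KStonePos k L p → (P p ↔ ∀ q, KStoneMove k L p q → ¬ P q)) :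
    ∀ x y S, KStonePos k L (x, y, S) →
      (P (x, y, S) ↔ Desires (k + 1) R x y ∧
        ∀ z, R x z → dist x z < dist x y → z ∈ S) := fun x y S hpos =>
  iff_of_wellFounded_kernel (wellFounded_flip_kStoneMove hchain)
    (fun _ _ => KStoneMove.kStonePos_right) hP
    (fun _ _ => not_kStoneKernel_of_kStoneMove hM hS hdist hperf)
    (fun _ => exists_kStoneMove_kernel hM hperf) (x, y, S) hpos

/-- let `k ≥ 1`, let `L` have distinct distances and no infinite descending
chains, and let `R` be its unique stable `(k+1)`-matching, assumed perfect.  Let `P` be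
the P-position predicate of `k`-stone colored friendly frogs on `L` (any predicate
satisfying the defining fixpoint equation, which determines it uniquely by
well-foundedness).  Then a position `(x, y, S)` is a P-position if and only if `x`
desires `y` and every partner of `x` closer to `x` than `y` is blocked by a stone. -/
theorem kstone_ppositions {d : ℕ} (k : ℕ) (hk : 1 ≤ k) (L : Set (Pt d))
    (hdist : DistinctDist L) (hchain : NoDescChain L)
    (R : Pt d → Pt d → Prop) (hM : IsMMatching (k + 1) L R) (hS : IsMStable (k + 1) L R)
    (hperf : ∀ x ∈ L, {y | R x y}.ncard = k + 1)
    (P : Pt d × Pt d × Finset (Pt d) → Prop)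
    (hP : ∀ p, KStonePos k L p → (P p ↔ ∀ q, KStoneMove k L p q → ¬ P q)) :
    ∀ x y S, KStonePos k L (x, y, S) →
      (P (x, y, S) ↔ Desires (k + 1) R x y ∧
        ∀ z, R x z → dist x z < dist x y → z ∈ S) :=
  kstone_ppositions_general k L hdist hchain R hM hS hperf P hP
end
end

section
/- Let L ⊂ ℝ^d have distinct distances and no infinite descending chains, let M be the unique stable matching of L, and let G be the Sprague–Grundy function of friendly frogs on L. Then for all distinct x, y ∈ L, G(x,y) = 0 if and only if {x,y} ∈ M. -/
noncomputable section

/-- `G` is the Sprague–Grundy function of friendly frogs on `L`: it is symmetric (being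
defined on unordered pairs), and for distinct `x, y ∈ L`, `G x y` is the minimum excluded
value (`mex`) of the set of Grundy values of the positions reachable by one legal move
from `{x, y}`, i.e. pairs `{x, z}` with `dist x z < dist x y` or `{y, z}` with
`dist y z < dist x y`, where `z ∈ L \ {x, y}`.  (By well-foundedness of the move relation
this fixpoint equation determines `G` uniquely.) -/
def IsGrundy {d : ℕ} (L : Set (Pt d)) (G : Pt d → Pt d → ℕ) : Prop :=
  (∀ x y, G x y = G y x) ∧
  ∀ x ∈ L, ∀ y ∈ L, x ≠ y →
    G x y = sInf {n : ℕ | n ∉ {m : ℕ | ∃ z ∈ L, z ≠ x ∧ z ≠ y ∧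
      ((dist x z < dist x y ∧ m = G x z) ∨ (dist y z < dist x y ∧ m = G y z))}}

/-!
Induct along the moves of the game. These are well-founded: if one frog eventually stays put,
the other one visits infinitely many points of `L` in a bounded ball, which is impossible since
an accumulation point of `L` would carry a descending chain; otherwise the successive landing
points of the jumping frogs form a descending chain.

If `x` and `y` are matched, every move leads to a shorter unmatched pair, whose Grundy value is
nonzero by induction, so `G x y = 0`. If they are not, stability and distinct distances give a
partner of `x` or of `y` strictly closer than `dist x y`; moving there reaches a matched pair,
of Grundy value `0`, so `G x y ≠ 0`.
-/

open Filter

section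

variable {d : ℕ} {L : Set (Pt d)}

lemma NoDescChain.not_accPt (hchain : NoDescChain L) (a : Pt d) : ¬ AccPt a (𝓟 L) := by
  intro hacc
  have near : ∀ ε > 0, ∃ z ∈ L, z ≠ a ∧ dist z a < ε := fun ε hε => by
    obtain ⟨z, ⟨hz, hzL⟩, hza⟩ := accPt_iff_nhds.mp hacc _ (Metric.ball_mem_nhds a hε)
    exact ⟨z, hzL, hza, hz⟩
  let T := {z : Pt d // z ∈ L ∧ z ≠ a}
  have step : ∀ z : T, ∃ z' : T, dist z'.1 a < dist z.1 a / 4 := fun z => by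
    have hpos := dist_pos.mpr z.2.2
    obtain ⟨z', hz'L, hz'a, hlt⟩ := near (dist z.1 a / 4) (by positivity)
    exact ⟨⟨z', hz'L, hz'a⟩, hlt⟩
  choose next hnext using step
  obtain ⟨z₀, hz₀L, hz₀a, -⟩ := near 1 one_pos
  let c : ℕ → T := fun n => next^[n] ⟨z₀, hz₀L, hz₀a⟩
  have hc : ∀ n, dist (c (n + 1)).1 a < dist (c n).1 a / 4 := fun n => by
    simp only [c, Function.iterate_succ_apply']
    exact hnext _
  refine hchain ⟨fun n => (c n).1, fun n => (c n).2.1, strictAnti_nat_of_succ_lt fun n => ?_⟩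
  -- with `δ k = dist (c k) a`: `dist (c n) (c (n+1)) ≥ δ n - δ (n+1) > 3 δ (n+1)`, while
  -- `dist (c (n+1)) (c (n+2)) ≤ δ (n+1) + δ (n+2) < 2 δ (n+1)`
  have h₀ := hc n
  have h₁ := hc (n + 1)
  have := dist_nonneg (x := (c (n + 2)).1) (y := a)
  have := dist_triangle (c n).1 (c (n + 1)).1 a
  have := dist_triangle_right (c (n + 1)).1 (c (n + 2)).1 a
  linarith

lemma NoDescChain.finite_inter_ball (hchain : NoDescChain L) (x : Pt d) (r : ℝ) :
    (L ∩ Metric.ball x r).Finite := by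
  by_contra hinf
  obtain ⟨a, -, hacc⟩ := Set.Infinite.exists_accPt_of_subset_isCompact hinf
    (isCompact_closedBall x r) (Set.inter_subset_right.trans Metric.ball_subset_closedBall)
  exact hchain.not_accPt a (hacc.mono (principal_mono.2 Set.inter_subset_left))

lemma NoDescChain.not_strictAnti_dist (hchain : NoDescChain L) (p : Pt d) {b : ℕ → Pt d}
    (hb : ∀ n, b n ∈ L) : ¬ StrictAnti fun n => dist p (b n) := by
  intro hanti
  refine (hchain.finite_inter_ball p (dist p (b 0) + 1)).not_infinite <|
    Set.infinite_of_injective_forall_mem (fun m n h => hanti.injective (by simp only [h]))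
      fun n => ⟨hb n, ?_⟩
  rw [Metric.mem_ball, dist_comm]
  exact (hanti.antitone (Nat.zero_le n)).trans_lt (lt_add_one _)

/-- A play of friendly frogs, the frog on `a n` staying put in the `n`-th move, cannot last
forever. -/
lemma NoDescChain.false_of_play (hchain : NoDescChain L) {a b : ℕ → Pt d} (hb : ∀ n, b n ∈ L)
    (ha : ∀ n, a (n + 1) ∈ ({a n, b n} : Set (Pt d)))
    (hD : StrictAnti fun n => dist (a n) (b n)) : False := by
  set S := {n | a (n + 1) ≠ a n}
  rcases S.finite_or_infinite with hfin | hinf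
  · obtain ⟨N, hN⟩ := hfin.bddAbove
    have hconst : ∀ k, a (N + 1 + k) = a (N + 1) := fun k =>
      (Nat.rel_of_forall_rel_succ_of_le_of_le (· = ·) (a := N + 1)
        (fun n hn => by_contra fun h => by have := hN (Ne.symm h); omega) le_rfl
        (Nat.le_add_right _ k)).symm
    refine hchain.not_strictAnti_dist (a (N + 1)) (b := fun k => b (N + 1 + k)) (fun k => hb _)
      fun i j hij => ?_
    have := hD (show N + 1 + i < N + 1 + j by omega)
    simp only [hconst] at this
    exact this
  · obtain ⟨n, hmono, hmem, hgap⟩ : ∃ n : ℕ → ℕ, StrictMono n ∧ (∀ k, n k ∈ S) ∧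
        ∀ k m, m < n (k + 1) → m ∈ S → m ≤ n k :=
      ⟨_, Nat.nth_strictMono hinf, Nat.nth_mem_of_infinite hinf,
        fun _ _ => Nat.le_nth_of_lt_nth_succ⟩
    -- between two consecutive jumps of `a`, it sits on the point it jumped to
    have hjump : ∀ k, a (n (k + 1)) = b (n k) := fun k => by
      have hleave : a (n k + 1) = b (n k) := (ha (n k)).resolve_left (hmem k)
      have hstay : ∀ m, n k + 1 ≤ m → m ≤ n (k + 1) → a m = a (n k + 1) := by
        intro m hm
        induction m, hm using Nat.le_induction with
        | base => exact fun _ => rfl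
        | succ m hm ih =>
          intro hm'
          rw [← ih (by omega)]
          by_contra h
          have := hgap k m (by omega) h
          omega
      exact (hstay _ (hmono k.lt_succ_self) le_rfl).trans hleave
    refine hchain ⟨fun k => b (n k), fun k => hb _, fun i j hij => ?_⟩
    have := hD (hmono (Nat.succ_lt_succ hij))
    dsimp only
    rw [← hjump i, ← hjump j]
    exact this

/-- `q` arises from `p` by a move of friendly frogs in which the frog on `q.1` stays put. -/
def FrogMove (L : Set (Pt d)) (q p : Pt d × Pt d) : Prop :=
  q.1 ∈ ({p.1, p.2} : Set (Pt d)) ∧ q.2 ∈ L ∧ dist q.1 q.2 < dist p.1 p.2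

lemma NoDescChain.wellFounded_frogMove (hchain : NoDescChain L) : WellFounded (FrogMove L) :=
  wellFounded_iff_isEmpty_descending_chain.2 ⟨fun ⟨f, hf⟩ =>
    hchain.false_of_play (a := fun n => (f (n + 1)).1) (b := fun n => (f (n + 1)).2)
      (fun n => (hf n).2.1) (fun n => (hf (n + 1)).1)
      (strictAnti_nat_of_succ_lt fun n => (hf (n + 1)).2.2)⟩

lemma IsGrundy.eq_zero_iff (hchain : NoDescChain L) {G : Pt d → Pt d → ℕ} (hG : IsGrundy L G)
    {x y : Pt d} (hx : x ∈ L) (hy : y ∈ L) (hxy : x ≠ y) :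
    G x y = 0 ↔ ∀ u ∈ ({x, y} : Set (Pt d)), ∀ z ∈ L, z ≠ x → z ≠ y →
      dist u z < dist x y → G u z ≠ 0 := by
  rw [hG.2 x hx y hy hxy, Nat.sInf_eq_zero]
  set V := {m : ℕ | ∃ z ∈ L, z ≠ x ∧ z ≠ y ∧
    ((dist x z < dist x y ∧ m = G x z) ∨ (dist y z < dist x y ∧ m = G y z))}
  -- the mex is not the junk value `sInf ∅` because there are only finitely many options
  have hV : V.Finite := by
    refine (((hchain.finite_inter_ball x (dist x y)).image (G x)).union
      ((hchain.finite_inter_ball y (dist x y)).image (G y))).subset ?_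
    rintro m ⟨z, hzL, -, -, ⟨hlt, rfl⟩ | ⟨hlt, rfl⟩⟩
    · exact Or.inl ⟨z, ⟨hzL, by rwa [Metric.mem_ball, dist_comm]⟩, rfl⟩
    · exact Or.inr ⟨z, ⟨hzL, by rwa [Metric.mem_ball, dist_comm]⟩, rfl⟩
  rw [or_iff_left (show {n | n ∉ V} ≠ ∅ from hV.infinite_compl.nonempty.ne_empty)]
  simp only [V, Set.mem_ofPred_eq, Set.mem_insert_iff, Set.mem_singleton_iff,
    forall_eq_or_imp, forall_eq]
  grind

lemma IsStable.exists_partner_lt (hdist : DistinctDist L) {R : Pt d → Pt d → Prop}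
    (hM : IsMatching L R) (hS : IsStable L R) {x y : Pt d} (hx : x ∈ L) (hy : y ∈ L)
    (hxy : x ≠ y) (hR : ¬ R x y) :
    ∃ u ∈ ({x, y} : Set (Pt d)), ∃ z ∈ L, z ≠ x ∧ z ≠ y ∧ R u z ∧ dist u z < dist x y := by
  obtain ⟨u, hu, z, huz, hle⟩ :
      ∃ u ∈ ({x, y} : Set (Pt d)), ∃ z, R u z ∧ dist u z ≤ dist x y := by
    by_contra! h
    exact hS ⟨x, hx, y, hy, hxy, hR, h x (by simp), h y (by simp)⟩
  obtain ⟨huL, hzL, huz'⟩ := hM.2.1 u z huz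
  have hzx : z ≠ x := by
    rintro rfl
    rcases hu with rfl | rfl
    exacts [huz' rfl, hR (hM.1 _ _ huz)]
  have hzy : z ≠ y := by
    rintro rfl
    rcases hu with rfl | rfl
    exacts [hR huz, huz' rfl]
  refine ⟨u, hu, z, hzL, hzx, hzy, huz, hle.lt_of_ne fun heq => ?_⟩
  rcases hdist u huL z hzL x hx y hy huz' hxy heq with ⟨-, h⟩ | ⟨-, h⟩
  exacts [hzy h, hzx h]

lemma grundy_eq_zero_iff_of_forall_move (hdist : DistinctDist L) (hchain : NoDescChain L)
    {R : Pt d → Pt d → Prop} (hM : IsMatching L R) (hS : IsStable L R)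
    {G : Pt d → Pt d → ℕ} (hG : IsGrundy L G) {x y : Pt d} (hx : x ∈ L) (hy : y ∈ L)
    (hxy : x ≠ y)
    (ih : ∀ u ∈ ({x, y} : Set (Pt d)), ∀ z ∈ L, u ≠ z → dist u z < dist x y →
      (G u z = 0 ↔ R u z)) :
    G x y = 0 ↔ R x y := by
  rw [hG.eq_zero_iff hchain hx hy hxy]
  constructor
  · intro hnonzero
    by_contra hR
    obtain ⟨u, hu, z, hzL, hzx, hzy, huz, hlt⟩ := hS.exists_partner_lt hdist hM hx hy hxy hR
    exact hnonzero u hu z hzL hzx hzy hlt ((ih u hu z hzL (hM.2.1 u z huz).2.2 hlt).2 huz)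
  · intro hR u hu z hzL hzx hzy hlt hzero
    rcases hu with rfl | rfl
    · exact hzy (hM.2.2 u y z hR ((ih u (by simp) z hzL hzx.symm hlt).1 hzero)).symm
    · exact hzx (hM.2.2 u x z (hM.1 x u hR) ((ih u (by simp) z hzL hzy.symm hlt).1 hzero)).symm

end

/-- let `L` have distinct distances and no infinite descending chains, let
`R` be its unique stable matching and `G` the Sprague–Grundy function of friendly frogs
on `L`.  Then for distinct `x, y ∈ L`, `G x y = 0` if and only if `x` and `y` are matched
to each other. -/
theorem grundy_zero_iff_stable_matching {d : ℕ} (L : Set (Pt d))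
    (hdist : DistinctDist L) (hchain : NoDescChain L)
    (R : Pt d → Pt d → Prop) (hM : IsMatching L R) (hS : IsStable L R)
    (G : Pt d → Pt d → ℕ) (hG : IsGrundy L G) :
    ∀ x ∈ L, ∀ y ∈ L, x ≠ y → (G x y = 0 ↔ R x y) := by
  suffices ∀ p : Pt d × Pt d, p.1 ∈ L → p.2 ∈ L → p.1 ≠ p.2 → (G p.1 p.2 = 0 ↔ R p.1 p.2) from
    fun x hx y hy hxy => this (x, y) hx hy hxy
  intro p
  induction p using hchain.wellFounded_frogMove.induction with
  | _ p ih =>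
    intro hx hy hxy
    refine grundy_eq_zero_iff_of_forall_move hdist hchain hM hS hG hx hy hxy
      fun u hu z hzL huz hlt => ih (u, z) ⟨hu, hzL, hlt⟩ ?_ hzL huz
    rcases hu with rfl | rfl <;> assumption
end
end
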